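/- Given a separation grid in a model category, a cofibrant object T, a map η : T → Q, and a map κ₀ : T → F^{0,k+1} with Φ⁰∘κ₀ left homotopic to q₁∘φ¹∘η, if the two equivalent conditions of the Separation Lemma hold (i.e. the induced κ₁ satisfies s∘κ₁ left homotopic to Γ_{k−1}∘η), then after changing κ₁ within its left homotopy class (and accordingly replacing κ₀ by u₁∘κ₁ within its homotopy class), without altering Γ_{k−1}, the map η lifts along p_{k−1}: there exists f : T → P with p_{k−1}∘f = η whose composite with the top-row maps P → F^{1,k+1} equals the altered κ₁. -/

import Mathlib

/-!
A cylinder inclusion of a cofibrant object is an acyclic cofibration, so left homotopies lift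
along fibrations. Lifting `hΓ` along the fibration `F^{1,k+1} ⟶ F^{1,k}` replaces `κ₁` by a
homotopic map lying strictly over `η ≫ Γ_{k-1}`. Pasting the leftmost square with the pullback
squares between rows `k+1` and `k` shows that the rectangle from `P ⟶ Q` to
`F^{1,k+1} ⟶ F^{1,k}` is a pullback, and the lift to `P` is the induced map.
-/

open CategoryTheory CategoryTheory.Limits

universe v u

noncomputable section

/-- A (Quillen) model structure on a category `ℰ`, given by the classes of weak
equivalences, fibrations and cofibrations, satisfying the usual axioms. -/
structure ModelStruct (ℰ : Type u) [Category.{v} ℰ] : Type (max u v) where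
  weq : MorphismProperty ℰ
  fib : MorphismProperty ℰ
  cof : MorphismProperty ℰ
  weq_comp : ∀ {X Y Z : ℰ} (f : X ⟶ Y) (g : Y ⟶ Z), weq f → weq g → weq (f ≫ g)
  weq_cancel_left : ∀ {X Y Z : ℰ} (f : X ⟶ Y) (g : Y ⟶ Z), weq f → weq (f ≫ g) → weq g
  weq_cancel_right : ∀ {X Y Z : ℰ} (f : X ⟶ Y) (g : Y ⟶ Z), weq g → weq (f ≫ g) → weq f
  weq_retract : ∀ {X Y X' Y' : ℰ} (f : X ⟶ Y) (g : X' ⟶ Y')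
    (i : Arrow.mk f ⟶ Arrow.mk g) (r : Arrow.mk g ⟶ Arrow.mk f),
    i ≫ r = 𝟙 _ → weq g → weq f
  fib_retract : ∀ {X Y X' Y' : ℰ} (f : X ⟶ Y) (g : X' ⟶ Y')
    (i : Arrow.mk f ⟶ Arrow.mk g) (r : Arrow.mk g ⟶ Arrow.mk f),
    i ≫ r = 𝟙 _ → fib g → fib f
  cof_retract : ∀ {X Y X' Y' : ℰ} (f : X ⟶ Y) (g : X' ⟶ Y')
    (i : Arrow.mk f ⟶ Arrow.mk g) (r : Arrow.mk g ⟶ Arrow.mk f),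
    i ≫ r = 𝟙 _ → cof g → cof f
  lift_acof_fib : ∀ {A B X Y : ℰ} (i : A ⟶ B) (p : X ⟶ Y),
    cof i → weq i → fib p → HasLiftingProperty i p
  lift_cof_afib : ∀ {A B X Y : ℰ} (i : A ⟶ B) (p : X ⟶ Y),
    cof i → fib p → weq p → HasLiftingProperty i p
  fact_acof_fib : ∀ {X Y : ℰ} (f : X ⟶ Y), ∃ (Z : ℰ) (i : X ⟶ Z) (p : Z ⟶ Y),
    cof i ∧ weq i ∧ fib p ∧ i ≫ p = f
  fact_cof_afib : ∀ {X Y : ℰ} (f : X ⟶ Y), ∃ (Z : ℰ) (i : X ⟶ Z) (p : Z ⟶ Y),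
    cof i ∧ fib p ∧ weq p ∧ i ≫ p = f

variable {ℰ : Type u} [Category.{v} ℰ]

/-- An object is cofibrant if the map from the initial object is a cofibration. -/
def ModelStruct.Cofibrant [HasInitial ℰ] (M : ModelStruct ℰ) (X : ℰ) : Prop :=
  M.cof (initial.to X)

/-- An object is fibrant if the map to the terminal object is a fibration. -/
def ModelStruct.Fibrant [HasTerminal ℰ] (M : ModelStruct ℰ) (X : ℰ) : Prop :=
  M.fib (terminal.from X)

/-- Left homotopy of two maps, via some cylinder object. -/
def LeftHomotopic [HasBinaryCoproducts ℰ] (M : ModelStruct ℰ) {X Y : ℰ} (f g : X ⟶ Y) : Prop :=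
  ∃ (C : ℰ) (i₁ i₂ : X ⟶ C) (p : C ⟶ X) (H : C ⟶ Y),
    M.cof (coprod.desc i₁ i₂) ∧ M.weq p ∧
    i₁ ≫ p = 𝟙 X ∧ i₂ ≫ p = 𝟙 X ∧ i₁ ≫ H = f ∧ i₂ ≫ H = g

/-- Right homotopy of two maps, via some path object. -/
def RightHomotopic [HasBinaryProducts ℰ] (M : ModelStruct ℰ) {X Y : ℰ} (f g : X ⟶ Y) : Prop :=
  ∃ (P : ℰ) (p₁ p₂ : P ⟶ Y) (s : Y ⟶ P) (H : X ⟶ P),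
    M.fib (prod.lift p₁ p₂) ∧ M.weq s ∧
    s ≫ p₁ = 𝟙 Y ∧ s ≫ p₂ = 𝟙 Y ∧ H ≫ p₁ = f ∧ H ≫ p₂ = g

/-- A weak lattice: a locally finite directed indexing category with a degree function. -/
structure WeakLattice (J : Type) [SmallCategory J] where
  deg : J → ℕ
  locallyFinite : ∀ x y : J, Finite (x ⟶ y)
  connected : IsConnected J
  finitePerDeg : ∀ n : ℕ, Finite { t : J // deg t = n }
  hom_deg_lt : ∀ {x y : J}, (x ⟶ y) → x ≠ y → deg y < deg x
  endo_eq_id : ∀ (x : J) (f : x ⟶ x), f = 𝟙 x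
  to_deg_zero : ∀ x : J, ∃ t : J, deg t = 0 ∧ Nonempty (x ⟶ t)

variable {J : Type} [SmallCategory J]

namespace WeakLattice

/-- Objects of degree at most `k` admitting a map from `x`. -/
def Below (L : WeakLattice J) (x : J) (k : ℕ) (t : J) : Prop :=
  L.deg t ≤ k ∧ Nonempty (x ⟶ t)

/-- The category `∂𝒥ₓᵏ`. -/
abbrev Bdry (L : WeakLattice J) (x : J) (k : ℕ) : Type :=
  ObjectProperty.FullSubcategory (L.Below x k)

/-- The category `𝒥ₓᵏ`: `x` together with `∂𝒥ₓᵏ`. -/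
abbrev Jxk (L : WeakLattice J) (x : J) (k : ℕ) : Type :=
  ObjectProperty.FullSubcategory (fun t => t = x ∨ L.Below x k t)

def bdryIncl (L : WeakLattice J) (x : J) (k : ℕ) : L.Bdry x k ⥤ J :=
  ObjectProperty.ι _

def bdryToJxk (L : WeakLattice J) (x : J) (k : ℕ) : L.Bdry x k ⥤ L.Jxk x k :=
  ObjectProperty.ιOfLE (fun _ ht => Or.inr ht)

/-- `x` as an object of `𝒥ₓᵏ`. -/
def xObj (L : WeakLattice J) (x : J) (k : ℕ) : L.Jxk x k := ⟨x, Or.inl rfl⟩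

end WeakLattice

variable [HasLimits ℰ]

/-- The matching object `Mₓᵏ(Y)`: the limit over the comma category `(x ↓ ∂𝒥ₓᵏ)`. -/
def matchObj (L : WeakLattice J) (x : J) (k : ℕ) (Y : L.Bdry x k ⥤ ℰ) : ℰ :=
  limit (StructuredArrow.proj x (L.bdryIncl x k) ⋙ Y)

/-- Index of pairs `(t, f : x ⟶ t)` with `deg t ≤ k`. -/
abbrev IdxLE (L : WeakLattice J) (x : J) (k : ℕ) : Type :=
  Σ t : L.Bdry x k, (x ⟶ t.obj)

/-- The product `∏_{f : x → t, deg t ≤ k} Y(t)`. -/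
def prodLE (L : WeakLattice J) (x : J) (k : ℕ) (Y : L.Bdry x k ⥤ ℰ) : ℰ :=
  ∏ᶜ fun p : IdxLE L x k => Y.obj p.1

/-- The forgetful (monic) map from the matching object to the underlying product. -/
def forgetMap (L : WeakLattice J) (x : J) (k : ℕ) (Y : L.Bdry x k ⥤ ℰ) :
    matchObj L x k Y ⟶ prodLE L x k Y :=
  Pi.lift fun p => limit.π (StructuredArrow.proj x (L.bdryIncl x k) ⋙ Y)
    (StructuredArrow.mk (Y := p.1) p.2)


variable {ℰ : Type u} [Category.{v} ℰ]

/-- A separation grid in a model category (see the Separation Lemma): objects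
`F j i` for `0 ≤ j ≤ k-1` and `j+1 ≤ i ≤ k+1` together with `P` and `Q`,
horizontal maps `u`, vertical maps `d`, structure maps from `P` and `Q`, all
rectangles pullbacks, with the indicated fibrations, fibrant objects and the
monomorphism `z`.  (The data is given totally in `j`, `i`; the axioms only
constrain the entries within the stated ranges.) -/
structure SepGrid [HasTerminal ℰ] (M : ModelStruct ℰ) (k : ℕ) where
  F : ℕ → ℕ → ℰ
  P : ℰ
  Q : ℰ
  /-- horizontal maps `u_j` (in each row `i`) -/
  u : ∀ j i : ℕ, F j i ⟶ F (j - 1) i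
  /-- vertical maps (in each column `j`) -/
  d : ∀ j i : ℕ, F j i ⟶ F j (i - 1)
  /-- the map `P ⟶ F^{k-1,k+1}` -/
  Pto : P ⟶ F (k - 1) (k + 1)
  /-- the fibration `p_{k-1} : P ⟶ Q` -/
  pP : P ⟶ Q
  /-- `γ_k : Q ⟶ F^{k-1,k}` -/
  γ : Q ⟶ F (k - 1) k
  /-- `φ^j : Q ⟶ F^{j,j+1}` for `1 ≤ j ≤ k-1` -/
  φ : ∀ j : ℕ, Q ⟶ F j (j + 1)
  pP_fib : M.fib pP
  /-- the leftmost square commutes and is a pullback -/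
  left_square : IsPullback Pto pP (d (k - 1) (k + 1)) γ
  /-- every (unit) rectangle of the grid is a pullback -/
  squares : ∀ j i : ℕ, 1 ≤ j → j ≤ k - 1 → j + 2 ≤ i → i ≤ k + 1 →
    IsPullback (u j i) (d j i) (d (j - 1) i) (u j (i - 1))
  /-- the horizontal maps in rows `k+1` and `k` are fibrations -/
  row_top_fib : ∀ j : ℕ, 1 ≤ j → j ≤ k - 1 → M.fib (u j (k + 1)) ∧ M.fib (u j k)
  /-- the staircase maps `q_j : F^{j,j+1} ⟶ F^{j-1,j+1}` are fibrations -/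
  q_fib : ∀ j : ℕ, 1 ≤ j → j ≤ k - 1 → M.fib (u j (j + 1))
  /-- the staircase maps `p_j : F^{j,j+2} ⟶ F^{j-1,j+2}` are fibrations -/
  p_fib : ∀ j : ℕ, 1 ≤ j → j ≤ k - 1 → M.fib (u j (j + 2))
  /-- the vertical maps `r_j : F^{j,j+2} ⟶ F^{j,j+1}` are fibrations -/
  r_fib : ∀ j : ℕ, j ≤ k - 1 → M.fib (d j (j + 2))
  /-- the vertical maps from row `k+1` to row `k` are fibrations -/
  vert_top_fib : ∀ j : ℕ, j ≤ k - 1 → M.fib (d j (k + 1))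
  /-- `F^{0,1}` is fibrant -/
  fibrant_base : M.Fibrant (F 0 1)
  /-- the objects `F^{j,k}` are fibrant -/
  fibrant_row_k : ∀ j : ℕ, j ≤ k - 1 → M.Fibrant (F j k)
  /-- `z : F^{0,k} ⟶ F^{0,k-1}` is a monomorphism -/
  z_mono : Mono (d 0 k)

namespace SepGrid

variable [HasTerminal ℰ] {M : ModelStruct ℰ} {k : ℕ}

/-- Iterated horizontal composite `F j i ⟶ F (j - m) i`. -/
def hIter (G : SepGrid M k) (i j : ℕ) : ∀ m : ℕ, (G.F j i ⟶ G.F (j - m) i)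
  | 0 => 𝟙 _
  | m + 1 => G.hIter i j m ≫ G.u (j - m) i

/-- Iterated vertical composite `F j i ⟶ F j (i - m)`. -/
def vIter (G : SepGrid M k) (j i : ℕ) : ∀ m : ℕ, (G.F j i ⟶ G.F j (i - m))
  | 0 => 𝟙 _
  | m + 1 => G.vIter j i m ≫ G.d j (i - m)

/-- `Γ_{k-1} : Q ⟶ F^{1,k}`, the horizontal composite of `γ_k` with the row-`k` maps. -/
def Gamma (G : SepGrid M k) (hk : 2 ≤ k) : G.Q ⟶ G.F 1 k :=
  G.γ ≫ G.hIter k (k - 1) (k - 2) ≫ eqToHom (congrArg (fun t => G.F t k) (by omega : k - 1 - (k - 2) = 1))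

/-- `β_j : F^{j,k+1} ⟶ F^{j,j+2}`, the vertical composite. -/
def beta (G : SepGrid M k) (hk : 2 ≤ k) (j : ℕ) (hj : j ≤ k - 1) : G.F j (k + 1) ⟶ G.F j (j + 2) :=
  G.vIter j (k + 1) (k - 1 - j) ≫ eqToHom (congrArg (fun t => G.F j t) (by omega : k + 1 - (k - 1 - j) = j + 2))

/-- `Φ^j : F^{j,k+1} ⟶ F^{j,j+1}`, the full vertical composite. -/
def Phi (G : SepGrid M k) (hk : 2 ≤ k) (j : ℕ) (hj : j ≤ k - 1) : G.F j (k + 1) ⟶ G.F j (j + 1) :=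
  G.beta hk j hj ≫ G.d j (j + 2)

end SepGrid


/-- The composite of the top-row maps `P ⟶ F^{1,k+1}`. -/
def SepGrid.topRow {ℰ : Type u} [Category.{v} ℰ] [HasTerminal ℰ] {M : ModelStruct ℰ} {k : ℕ}
    (G : SepGrid M k) (hk : 2 ≤ k) : G.P ⟶ G.F 1 (k + 1) :=
  G.Pto ≫ G.hIter (k + 1) (k - 1) (k - 2) ≫
    eqToHom (congrArg (fun t => G.F t (k + 1)) (by omega : k - 1 - (k - 2) = 1))


namespace ModelStruct

variable {ℰ : Type u} [Category.{v} ℰ] (M : ModelStruct ℰ)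

lemma weq_id (X : ℰ) : M.weq (𝟙 X) := by
  obtain ⟨Z, i, p, -, hi, -, hip⟩ := M.fact_acof_fib (𝟙 X)
  refine M.weq_retract (𝟙 X) i (Arrow.homMk (u := 𝟙 X) (v := i) (by simp))
    (Arrow.homMk (u := 𝟙 X) (v := p) (by simp [hip])) ?_ hi
  ext <;> simp [hip]

/-- The retract argument: `i` is a retract of the cofibration in its factorisation. -/
lemma cof_of_hasLiftingProperty {A B : ℰ} (i : A ⟶ B)
    (h : ∀ {X Y : ℰ} (p : X ⟶ Y), M.fib p → M.weq p → HasLiftingProperty i p) : M.cof i := by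
  obtain ⟨Z, g, q, hg, hq, hwq, hgq⟩ := M.fact_cof_afib i
  have := h q hq hwq
  have sq : CommSq g i q (𝟙 B) := ⟨by simp [hgq]⟩
  refine M.cof_retract i g (Arrow.homMk (u := 𝟙 A) (v := sq.lift) (by simp))
    (Arrow.homMk (u := 𝟙 A) (v := q) (by simp [hgq])) ?_ hg
  ext <;> simp

lemma cof_comp {A B C : ℰ} {i : A ⟶ B} {i' : B ⟶ C} (hi : M.cof i) (hi' : M.cof i') :
    M.cof (i ≫ i') := by
  refine M.cof_of_hasLiftingProperty _ fun p hp hwp => ?_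
  have := M.lift_cof_afib i p hi hp hwp
  have := M.lift_cof_afib i' p hi' hp hwp
  infer_instance

lemma cof_of_isIso {A B : ℰ} (i : A ⟶ B) [IsIso i] : M.cof i :=
  M.cof_of_hasLiftingProperty i fun _ _ _ => inferInstance

/-- `T ⟶ T ⨿ T` is the pushout of the cofibration `⊥ ⟶ T` along itself. -/
lemma cof_coprod_inl [HasInitial ℰ] [HasBinaryCoproducts ℰ] {T : ℰ} (hT : M.Cofibrant T) :
    M.cof (coprod.inl : T ⟶ T ⨿ T) := by
  refine M.cof_of_hasLiftingProperty _ fun p hp hwp => ⟨fun {f g} sq => ?_⟩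
  have := M.lift_cof_afib (initial.to T) p hT hp hwp
  have sq' : CommSq (initial.to _) (initial.to T) p (coprod.inr ≫ g) := ⟨initial.hom_ext _ _⟩
  refine ⟨⟨⟨coprod.desc f sq'.lift, coprod.inl_desc _ _, ?_⟩⟩⟩
  ext
  · simpa only [coprod.inl_desc_assoc] using sq.w
  · simpa only [coprod.inr_desc_assoc] using sq'.fac_right

end ModelStruct

section LeftHomotopy

variable {ℰ : Type u} [Category.{v} ℰ] [HasBinaryCoproducts ℰ] {M : ModelStruct ℰ}

lemma LeftHomotopic.symm {X Y : ℰ} {f g : X ⟶ Y} (h : LeftHomotopic M f g) :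
    LeftHomotopic M g f := by
  obtain ⟨C, i₁, i₂, p, H, hcof, hp, h₁, h₂, hH₁, hH₂⟩ := h
  have hswap : coprod.desc i₂ i₁ = (coprod.braiding X X).hom ≫ coprod.desc i₁ i₂ := by
    simp only [coprod.braiding_hom, coprod.desc_comp, coprod.inr_desc, coprod.inl_desc]
  refine ⟨C, i₂, i₁, p, H, ?_, hp, h₂, h₁, hH₂, hH₁⟩
  rw [hswap]
  exact M.cof_comp (M.cof_of_isIso _) hcof

variable [HasInitial ℰ]

lemma LeftHomotopic.exists_lift_of_fib {T X Y : ℰ} (hT : M.Cofibrant T) {p : X ⟶ Y}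
    (hp : M.fib p) {a : T ⟶ X} {b : T ⟶ Y} (h : LeftHomotopic M (a ≫ p) b) :
    ∃ a' : T ⟶ X, a' ≫ p = b ∧ LeftHomotopic M a a' := by
  obtain ⟨C, i₁, i₂, pC, H, hcof, hpC, h₁, h₂, hH₁, hH₂⟩ := h
  have hcof₁ : M.cof i₁ := by
    simpa only [coprod.inl_desc] using M.cof_comp (M.cof_coprod_inl hT) hcof
  have hweq₁ : M.weq i₁ := M.weq_cancel_right i₁ pC hpC (h₁ ▸ M.weq_id T)
  have := M.lift_acof_fib i₁ p hcof₁ hweq₁ hp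
  have sq : CommSq a i₁ p H := ⟨hH₁.symm⟩
  exact ⟨i₂ ≫ sq.lift, by simp [hH₂],
    C, i₁, i₂, pC, sq.lift, hcof, hpC, h₁, h₂, sq.fac_left, rfl⟩

end LeftHomotopy

namespace SepGrid

variable {ℰ : Type u} [Category.{v} ℰ] [HasTerminal ℰ] {M : ModelStruct ℰ} {k : ℕ}
  (G : SepGrid M k)

lemma isPullback_hIter (j : ℕ) (hj : j ≤ k - 1) (m : ℕ) (hm : m < j) :
    IsPullback (G.hIter (k + 1) j m) (G.d j (k + 1)) (G.d (j - m) (k + 1)) (G.hIter k j m) := by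
  induction m with
  | zero => exact IsPullback.id_horiz _
  | succ m ih =>
    exact (ih (by omega)).paste_horiz
      (G.squares (j - m) (k + 1) (by omega) (by omega) (by omega) le_rfl)

lemma isPullback_eqToHom {a b : ℕ} (h : a = b) (i : ℕ) :
    IsPullback (eqToHom (congrArg (fun t => G.F t i) h)) (G.d a i) (G.d b i)
      (eqToHom (congrArg (fun t => G.F t (i - 1)) h)) := by
  subst h
  exact IsPullback.id_horiz _

lemma isPullback_topRow (hk : 2 ≤ k) :
    IsPullback (G.topRow hk) G.pP (G.d 1 (k + 1)) (G.Gamma hk) :=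
  G.left_square.paste_horiz <| (G.isPullback_hIter (k - 1) le_rfl (k - 2) (by omega)).paste_horiz <|
    G.isPullback_eqToHom (by omega) (k + 1)

end SepGrid

/-- STATEMENT 11 (Corollary to the Separation Lemma) -/
theorem separation_corollary {ℰ : Type u} [Category.{v} ℰ] [HasLimits ℰ] [HasColimits ℰ]
    (M : ModelStruct ℰ) (k : ℕ) (hk : 2 ≤ k) (G : SepGrid M k)
    (T : ℰ) (hT : M.Cofibrant T) (η : T ⟶ G.Q)
    (κ₁ : T ⟶ G.F 1 (k + 1))
    -- the equivalent conditions of the Separation Lemma hold: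
    (hΓ : LeftHomotopic M (κ₁ ≫ G.d 1 (k + 1)) (η ≫ G.Gamma hk)) :
    -- after changing `κ₁` within its homotopy class, `η` lifts along `p_{k-1}`
    ∃ (κ₁' : T ⟶ G.F 1 (k + 1)) (f : T ⟶ G.P),
      LeftHomotopic M κ₁' κ₁ ∧
      f ≫ G.pP = η ∧
      f ≫ G.topRow hk = κ₁' := by
  obtain ⟨κ₁', hκ₁', hhom⟩ := hΓ.exists_lift_of_fib hT (G.vert_top_fib 1 (by omega))
  have hP := G.isPullback_topRow hk
  exact ⟨κ₁', hP.lift κ₁' η hκ₁', hhom.symm, hP.lift_snd _ _ _, hP.lift_fst _ _ _⟩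

end
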